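/- Let k ≥ 3 and let G be the group with presentation ⟨a, b | a^{2k}b^{2k} = 1, a^{2k-i}b^i = 1 and b^{2k-i}a^i = 1 for all i with 0 ≤ i ≤ k, i ≠ 1⟩. Then G is cyclic of order 2k, generated by the image of a. -/

import Mathlib

/-- The relations `a^{2k}b^{2k}` and, for each `0 ≤ i ≤ k` with `i ≠ 1`,
`a^{2k-i}b^i` and `b^{2k-i}a^i`, where `a = FreeGroup.of 0`, `b = FreeGroup.of 1`. -/
def nestRelsAll (k : ℕ) : Set (FreeGroup (Fin 2)) :=
  {FreeGroup.of 0 ^ (2 * k) * FreeGroup.of 1 ^ (2 * k)} ∪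
    ⋃ i ∈ {i : ℕ | i ≤ k ∧ i ≠ 1},
      { FreeGroup.of 0 ^ (2 * k - i) * FreeGroup.of 1 ^ i,
        FreeGroup.of 1 ^ (2 * k - i) * FreeGroup.of 0 ^ i }

/-!
The relations with `i = 0, 2, 3` give `a^{2k} = 1`, `b^2 = a^2` and `b^3 = a^3`, hence `b = a`,
so `G` is generated by `a` and has order dividing `2k`. Every relation is a word of total
exponent divisible by `2k`, so `a, b ↦ 1` defines a map onto `ℤ/2k`, and `a` has order exactly `2k`.
-/

section GroupLemmas

variable {G : Type*} [Group G]

theorem pow_eq_pow_of_pow_sub_mul_pow_eq_one {a b : G} {n i : ℕ} (ha : a ^ n = 1) (hi : i ≤ n)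
    (h : a ^ (n - i) * b ^ i = 1) : b ^ i = a ^ i :=
  mul_left_cancel (h.trans (by rw [← pow_add, Nat.sub_add_cancel hi, ha]))

theorem eq_of_sq_eq_sq_of_pow_three_eq {a b : G} (h2 : a ^ 2 = b ^ 2) (h3 : a ^ 3 = b ^ 3) :
    a = b :=
  calc a = a ^ 3 * (a ^ 2)⁻¹ := by group
    _ = b ^ 3 * (b ^ 2)⁻¹ := by rw [h2, h3]
    _ = b := by group

end GroupLemmas

theorem FreeGroup.lift_const_pow_mul_pow {α M : Type*} [Group M] (g : M) (x y : α) (m n : ℕ) :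
    FreeGroup.lift (fun _ => g) (FreeGroup.of x ^ m * FreeGroup.of y ^ n) = g ^ (m + n) := by
  simp [pow_add]

namespace NestGroup

open PresentedGroup

variable {k : ℕ}

theorem exists_pow_mul_pow_of_mem_nestRelsAll {r : FreeGroup (Fin 2)} (hr : r ∈ nestRelsAll k) :
    ∃ (x y : Fin 2) (m n : ℕ), r = FreeGroup.of x ^ m * FreeGroup.of y ^ n ∧ 2 * k ∣ m + n := by
  rcases hr with hr | hr
  · exact ⟨0, 1, 2 * k, 2 * k, hr, Dvd.intro 2 (by ring)⟩
  · simp only [Set.mem_iUnion, Set.mem_ofPred_eq] at hr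
    obtain ⟨i, ⟨hik, -⟩, hr | hr⟩ := hr
    · exact ⟨0, 1, 2 * k - i, i, hr, by rw [Nat.sub_add_cancel (by omega)]⟩
    · exact ⟨1, 0, 2 * k - i, i, hr, by rw [Nat.sub_add_cancel (by omega)]⟩

theorem of_pow_sub_mul_of_pow_eq_one {i : ℕ} (hik : i ≤ k) (hi1 : i ≠ 1) :
    (of 0 : PresentedGroup (nestRelsAll k)) ^ (2 * k - i) * of 1 ^ i = 1 := by
  have hr : FreeGroup.of 0 ^ (2 * k - i) * FreeGroup.of 1 ^ i ∈ nestRelsAll k :=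
    Or.inr (Set.mem_biUnion (x := i) ⟨hik, hi1⟩ (Or.inl rfl))
  have h := one_of_mem hr
  rw [map_mul, map_pow, map_pow] at h
  exact h

theorem of_zero_pow_eq_one : (of 0 : PresentedGroup (nestRelsAll k)) ^ (2 * k) = 1 := by
  simpa using of_pow_sub_mul_of_pow_eq_one (k := k) (Nat.zero_le k) zero_ne_one

theorem of_one_pow_eq_of_zero_pow {i : ℕ} (hik : i ≤ k) (hi1 : i ≠ 1) :
    (of 1 : PresentedGroup (nestRelsAll k)) ^ i = of 0 ^ i :=
  pow_eq_pow_of_pow_sub_mul_pow_eq_one of_zero_pow_eq_one (by omega)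
    (of_pow_sub_mul_of_pow_eq_one hik hi1)

theorem of_one_eq_of_zero (hk : 3 ≤ k) :
    (of 1 : PresentedGroup (nestRelsAll k)) = of 0 :=
  eq_of_sq_eq_sq_of_pow_three_eq (of_one_pow_eq_of_zero_pow (by omega) (by norm_num))
    (of_one_pow_eq_of_zero_pow hk (by norm_num))

theorem zpowers_of_zero_eq_top (hk : 3 ≤ k) :
    Subgroup.zpowers (of 0 : PresentedGroup (nestRelsAll k)) = ⊤ := by
  rw [eq_top_iff, ← closure_range_of, Subgroup.closure_le]
  rintro _ ⟨i, rfl⟩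
  fin_cases i
  · exact Subgroup.mem_zpowers _
  · exact (of_one_eq_of_zero hk).symm ▸ Subgroup.mem_zpowers _

def toZMod (k : ℕ) : PresentedGroup (nestRelsAll k) →* Multiplicative (ZMod (2 * k)) :=
  toGroup (f := fun _ => Multiplicative.ofAdd 1) fun r hr => by
    obtain ⟨x, y, m, n, rfl, hdvd⟩ := exists_pow_mul_pow_of_mem_nestRelsAll hr
    rw [FreeGroup.lift_const_pow_mul_pow, ← orderOf_dvd_iff_pow_eq_one,
      orderOf_ofAdd_eq_addOrderOf, ZMod.addOrderOf_one]
    exact hdvd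

theorem orderOf_of_zero : orderOf (of 0 : PresentedGroup (nestRelsAll k)) = 2 * k := by
  refine Nat.dvd_antisymm (orderOf_dvd_of_pow_eq_one of_zero_pow_eq_one) ?_
  have := orderOf_map_dvd (toZMod k) (of 0)
  rwa [toZMod, toGroup.of, orderOf_ofAdd_eq_addOrderOf, ZMod.addOrderOf_one] at this

end NestGroup

open NestGroup in
/-- For `k ≥ 3`, the group
`G = ⟨a, b | a^{2k}b^{2k} = 1, a^{2k-i}b^i = 1, b^{2k-i}a^i = 1 (0 ≤ i ≤ k, i ≠ 1)⟩`
is cyclic of order `2k`, generated by the image of `a`. -/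
theorem stmt1 (k : ℕ) (hk : 3 ≤ k) :
    Subgroup.zpowers (PresentedGroup.of 0 : PresentedGroup (nestRelsAll k)) = ⊤ ∧
      Nat.card (PresentedGroup (nestRelsAll k)) = 2 * k := by
  have htop := zpowers_of_zero_eq_top hk
  refine ⟨htop, ?_⟩
  rw [← orderOf_eq_card_of_forall_mem_zpowers fun x => htop ▸ Subgroup.mem_top x, orderOf_of_zero]
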